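/- Let (H,R) be a quasitriangular Hopf algebra with twist F = R, A a quasi-commutative left H-module algebra, and V a strong quasi-commutative left H-module A-bimodule. Then the R-twisted structures coincide with the opposite structures: H^R = H^cop as Hopf algebras, A_{⋆_R} = A^op as algebras, and V_{⋆_R} = V^op as A^op-bimodules. -/

import Mathlib

open TensorProduct

noncomputable section

variable (K : Type*) [CommRing K] (H : Type*) [Ring H] [HopfAlgebra K H]

namespace TwistPaper

def muH : H ⊗[K] H →ₗ[K] H := LinearMap.mul' K H
def ΔH : H →ₗ[K] H ⊗[K] H := Coalgebra.comul
def εH : H →ₗ[K] K := Coalgebra.counit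
def SH : H →ₗ[K] H := HopfAlgebra.antipode (R := K)

/-- `x ⊗ y ↦ x ⊗ (y ⊗ 1)`, i.e. `R ↦ R₁₂`. -/
def ins3 : H ⊗[K] H →ₗ[K] H ⊗[K] (H ⊗[K] H) :=
  LinearMap.lTensor H ((TensorProduct.mk K H H).flip 1)
/-- `R ↦ R₂₃ = 1 ⊗ R`. -/
def ins1 : H ⊗[K] H →ₗ[K] H ⊗[K] (H ⊗[K] H) :=
  TensorProduct.mk K H (H ⊗[K] H) 1
/-- `x ⊗ y ↦ x ⊗ (1 ⊗ y)`, i.e. `R ↦ R₁₃`. -/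
def ins2 : H ⊗[K] H →ₗ[K] H ⊗[K] (H ⊗[K] H) :=
  LinearMap.lTensor H (TensorProduct.mk K H H 1)
def comulLeft : H ⊗[K] H →ₗ[K] H ⊗[K] (H ⊗[K] H) :=
  (TensorProduct.assoc K H H H).toLinearMap ∘ₗ (ΔH K H).rTensor H
def comulRight : H ⊗[K] H →ₗ[K] H ⊗[K] (H ⊗[K] H) :=
  (ΔH K H).lTensor H

/-- `(H, R)` is quasitriangular: `R` is invertible, `Δ^cop(ξ) = R Δ(ξ) R⁻¹`,
`(Δ⊗id)R = R₁₃R₂₃` and `(id⊗Δ)R = R₁₃R₁₂`. -/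
structure IsQuasitriangular (Rm Rinv : H ⊗[K] H) : Prop where
  mul_inv : Rm * Rinv = 1
  inv_mul : Rinv * Rm = 1
  quasi_cocomm : ∀ ξ : H, TensorProduct.comm K H H (ΔH K H ξ) = Rm * ΔH K H ξ * Rinv
  hexagon1 : comulLeft K H Rm = ins2 K H Rm * ins1 K H Rm
  hexagon2 : comulRight K H Rm = ins2 K H Rm * ins3 K H Rm

/-- `sw x f g c v w = Σ c (f x¹ v) (g x² w)` for `x = Σ x¹ ⊗ x²`. -/
def sw {V W V' W' Z : Type*}
    [AddCommGroup V] [Module K V] [AddCommGroup W] [Module K W]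
    [AddCommGroup V'] [Module K V'] [AddCommGroup W'] [Module K W']
    [AddCommGroup Z] [Module K Z]
    (x : H ⊗[K] H) (f : H →ₗ[K] V →ₗ[K] V') (g : H →ₗ[K] W →ₗ[K] W')
    (c : V' →ₗ[K] W' →ₗ[K] Z) : V →ₗ[K] W →ₗ[K] Z :=
  ((TensorProduct.mapBilinear (RingHom.id K) H H V' W').compr₂
      (TensorProduct.lift c ∘ₗ LinearMap.applyₗ (R := K) x)).compl₁₂ f.flip g.flip

/-- `ρ` is a left `H`-module structure. -/
def IsHAction {V : Type*} [AddCommGroup V] [Module K V] (ρ : H →ₗ[K] V →ₗ[K] V) : Prop :=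
  (∀ ξ ζ : H, ∀ v : V, ρ (ξ * ζ) v = ρ ξ (ρ ζ v)) ∧ (∀ v : V, ρ 1 v = v)

/-- `(A, m, ρ)` is a left `H`-module algebra. -/
def IsModuleAlgebra {A : Type*} [AddCommGroup A] [Module K A]
    (m : A →ₗ[K] A →ₗ[K] A) (ρ : H →ₗ[K] A →ₗ[K] A) : Prop :=
  IsHAction K H ρ ∧ ∀ (ξ : H) (a b : A), ρ ξ (m a b) = sw K H (ΔH K H ξ) ρ ρ m a b

/-- `conjEnd f g (η ⊗ ζ) P = f η ∘ₗ P ∘ₗ g ζ` on `Hom_K(V,W)`. -/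
def conjEnd {V W : Type*} [AddCommGroup V] [Module K V] [AddCommGroup W] [Module K W]
    (f : H →ₗ[K] W →ₗ[K] W) (g : H →ₗ[K] V →ₗ[K] V) :
    H ⊗[K] H →ₗ[K] (V →ₗ[K] W) →ₗ[K] (V →ₗ[K] W) :=
  TensorProduct.lift
    ((LinearMap.llcomp K (V →ₗ[K] W) (V →ₗ[K] W) (V →ₗ[K] W) ∘ₗ
        (LinearMap.llcomp K V W W ∘ₗ f)).compl₂
      ((LinearMap.llcomp K V V W).flip ∘ₗ g))

/-- The `H`-adjoint action `ξ ▶ P = (ξ₁ ▷) ∘ P ∘ (S(ξ₂) ▷)` on `Hom_K(V,W)`. -/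
def adjHom {V W : Type*} [AddCommGroup V] [Module K V] [AddCommGroup W] [Module K W]
    (ρW : H →ₗ[K] W →ₗ[K] W) (ρV : H →ₗ[K] V →ₗ[K] V) :
    H →ₗ[K] (V →ₗ[K] W) →ₗ[K] (V →ₗ[K] W) :=
  conjEnd K H ρW (ρV ∘ₗ SH K H) ∘ₗ ΔH K H

/-- The tensor product action `ξ ▷ (v ⊗ w) = (ξ₁ ▷ v) ⊗ (ξ₂ ▷ w)`. -/
def tensAct {V W : Type*} [AddCommGroup V] [Module K V] [AddCommGroup W] [Module K W]
    (ρV : H →ₗ[K] V →ₗ[K] V) (ρW : H →ₗ[K] W →ₗ[K] W) :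
    H →ₗ[K] (V ⊗[K] W) →ₗ[K] (V ⊗[K] W) :=
  (TensorProduct.homTensorHomMap (RingHom.id K) V W V W ∘ₗ TensorProduct.map ρV ρW) ∘ₗ ΔH K H

/-- The `R`-tensor product of `K`-linear maps,
`P ⊗_R Q = (P ∘ (R̄^α ▷)) ⊗ (R̄_α ▶ Q)`, as a bilinear map in `(P,Q)`. -/
def otimesR {V W V' W' : Type*}
    [AddCommGroup V] [Module K V] [AddCommGroup W] [Module K W]
    [AddCommGroup V'] [Module K V'] [AddCommGroup W'] [Module K W']
    (Rinv : H ⊗[K] H)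
    (ρV : H →ₗ[K] V →ₗ[K] V) (ρW : H →ₗ[K] W →ₗ[K] W) (ρW' : H →ₗ[K] W' →ₗ[K] W') :
    (V →ₗ[K] V') →ₗ[K] (W →ₗ[K] W') →ₗ[K] (V ⊗[K] W →ₗ[K] V' ⊗[K] W') :=
  ((TensorProduct.mapBilinear (RingHom.id K) H H (V →ₗ[K] V') (W →ₗ[K] W')).compr₂
      (TensorProduct.homTensorHomMap (RingHom.id K) V W V' W' ∘ₗ LinearMap.applyₗ (R := K) Rinv)).compl₁₂
    (((LinearMap.llcomp K H (V →ₗ[K] V) (V →ₗ[K] V')).flip ρV) ∘ₗ LinearMap.llcomp K V V V')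
    ((adjHom K H ρW' ρW).flip)


/-- The twisted coproduct `Δ^F(ξ) = F Δ(ξ) F⁻¹` (here for the twist `F = R`). -/
def twistComul (F Finv : H ⊗[K] H) : H →ₗ[K] H ⊗[K] H :=
  LinearMap.mulLeft K F ∘ₗ LinearMap.mulRight K Finv ∘ₗ ΔH K H

/-- `χ = f^α S(f_α)`. -/
def chi (F : H ⊗[K] H) : H := muH K H ((SH K H).lTensor H F)
/-- `χ⁻¹ = S(f̄^α) f̄_α`. -/
def chiInv (Finv : H ⊗[K] H) : H := muH K H ((SH K H).rTensor H Finv)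

/-- The twisted antipode `S^F(ξ) = χ S(ξ) χ⁻¹` (here for the twist `F = R`). -/
def twistAntipode (F Finv : H ⊗[K] H) : H →ₗ[K] H :=
  LinearMap.mulLeft K (chi K H F) ∘ₗ LinearMap.mulRight K (chiInv K H Finv) ∘ₗ SH K H

variable {A V : Type*} [AddCommGroup A] [Module K A] [AddCommGroup V] [Module K V]

/-!
Quasi-cocommutativity says exactly `Δ^R = Δ^cop`, and quasi-commutativity of `A` and the first
form of strong quasi-commutativity of `V` say `a ⋆_R b = b a` and `a ⋆_R v = v·a`. For
`v ⋆_R a`, rewriting `rV` by the second form of strong quasi-commutativity braids with `R₂₁`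
and then with `R̄₂₁`, and `R₂₁ R̄₂₁ = 1`.

For the antipode, `Σ S^R(ξ₂) ξ₁ = χ · m(S ⊗ id)(R̄ Δ^cop ξ) = χ · m(S ⊗ id)(Δξ R̄) = ε(ξ) χ χ⁻¹`. Evaluating `x ⊗ y ⊗ z ↦ x S(y) z` on `R̄₂₃ R₁₂ (Δ ⊗ id) R` gives `χ χ⁻¹`, and
by the hexagon relations and the Yang–Baxter equation this element is `(id ⊗ Δ) R`, on which
the map gives `(id ⊗ ε) R = 1`. So `S^R` is a left inverse of `id` for the convolution of
`H^cop`; applying the anti-multiplicative `S` turns this into `S ⋆ (S ∘ S^R) = 1` for the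
ordinary convolution, whence `S ∘ S^R = id` and `S^R = S⁻¹`.
-/

section

variable {K H}

section Sweedler

variable {V W V' W' Z : Type*} [AddCommGroup V] [Module K V] [AddCommGroup W] [Module K W]
  [AddCommGroup V'] [Module K V'] [AddCommGroup W'] [Module K W'] [AddCommGroup Z] [Module K Z]

@[simp] theorem sw_tmul (ξ η : H) (f : H →ₗ[K] V →ₗ[K] V') (g : H →ₗ[K] W →ₗ[K] W')
    (c : V' →ₗ[K] W' →ₗ[K] Z) (v : V) (w : W) :
    sw K H (ξ ⊗ₜ η) f g c v w = c (f ξ v) (g η w) := by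
  simp [sw]

theorem sw_add (x y : H ⊗[K] H) (f : H →ₗ[K] V →ₗ[K] V') (g : H →ₗ[K] W →ₗ[K] W')
    (c : V' →ₗ[K] W' →ₗ[K] Z) (v : V) (w : W) :
    sw K H (x + y) f g c v w = sw K H x f g c v w + sw K H y f g c v w := by
  simp [sw]

theorem sw_flip (x : H ⊗[K] H) (f : H →ₗ[K] V →ₗ[K] V') (g : H →ₗ[K] W →ₗ[K] W')
    (c : W' →ₗ[K] V' →ₗ[K] Z) (v : V) (w : W) :
    sw K H x f g c.flip v w = sw K H (TensorProduct.comm K H H x) g f c w v := by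
  induction x using TensorProduct.induction_on with
  | zero => simp [sw]
  | tmul ξ η => simp
  | add u u' ih ih' => simp only [map_add, sw_add, ih, ih']

theorem sw_sw_eq_sw_mul (x y : H ⊗[K] H) {f : H →ₗ[K] V →ₗ[K] V} {g : H →ₗ[K] W →ₗ[K] W}
    (hf : ∀ ξ ζ v, f (ξ * ζ) v = f ξ (f ζ v)) (hg : ∀ ξ ζ w, g (ξ * ζ) w = g ξ (g ζ w))
    (c : V →ₗ[K] W →ₗ[K] Z) (v : V) (w : W) :
    sw K H x f g (sw K H y f g c) v w = sw K H (y * x) f g c v w := by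
  induction x using TensorProduct.induction_on with
  | zero => simp [sw]
  | add u u' ih ih' => simp only [mul_add, sw_add, ih, ih']
  | tmul ξ η =>
    rw [sw_tmul]
    induction y using TensorProduct.induction_on with
    | zero => simp [sw]
    | add u u' ih ih' => simp only [add_mul, sw_add, ih, ih']
    | tmul p q => simp [Algebra.TensorProduct.tmul_mul_tmul, hf, hg]

theorem sw_one {f : H →ₗ[K] V →ₗ[K] V} {g : H →ₗ[K] W →ₗ[K] W}
    (hf : ∀ v, f 1 v = v) (hg : ∀ w, g 1 w = w) (c : V →ₗ[K] W →ₗ[K] Z) (v : V) (w : W) :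
    sw K H 1 f g c v w = c v w := by
  simp [Algebra.TensorProduct.one_def, hf, hg]

end Sweedler

open WithConv in
theorem antipode_comp_eq_id_of_cop_left_inv (T : H →ₗ[K] H)
    (hT : ∀ ξ : H, muH K H (map T LinearMap.id (TensorProduct.comm K H H (ΔH K H ξ)))
      = εH K H ξ • 1) :
    SH K H ∘ₗ T = LinearMap.id := by
  have hS : ∀ u : H ⊗[K] H, LinearMap.mul' K H (map (SH K H) (SH K H ∘ₗ T) u)
      = SH K H (muH K H (map T LinearMap.id (TensorProduct.comm K H H u))) := by
    intro u
    induction u using TensorProduct.induction_on with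
    | zero => simp
    | tmul x y => simp [muH, SH, HopfAlgebra.antipode_mul_antidistrib]
    | add u u' ih ih' => simp only [map_add, ih, ih']
  have hinv : toConv (SH K H) * toConv (SH K H ∘ₗ T) = 1 := by
    ext ξ
    rw [LinearMap.convMul_apply, ofConv_toConv, ofConv_toConv, hS, ← ΔH, hT]
    simp [SH, εH, Algebra.algebraMap_eq_smul_one]
  apply toConv_injective
  calc toConv (SH K H ∘ₗ T)
      = (toConv LinearMap.id * toConv (SH K H)) * toConv (SH K H ∘ₗ T) := by
        rw [SH, LinearMap.id_mul_antipode, one_mul]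
    _ = toConv LinearMap.id := by rw [mul_assoc, hinv, mul_one]

variable (K H) in
def chiₗ : H ⊗[K] H →ₗ[K] H := muH K H ∘ₗ (SH K H).lTensor H
variable (K H) in
def chiInvₗ : H ⊗[K] H →ₗ[K] H := muH K H ∘ₗ (SH K H).rTensor H

@[simp] theorem chiₗ_tmul (x y : H) : chiₗ K H (x ⊗ₜ[K] y) = x * SH K H y := rfl
@[simp] theorem chiInvₗ_tmul (x y : H) : chiInvₗ K H (x ⊗ₜ[K] y) = SH K H x * y := rfl

theorem chiₗ_tmul_mul (a b : H) (r : H ⊗[K] H) :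
    chiₗ K H ((a ⊗ₜ b) * r) = a * chiₗ K H r * SH K H b := by
  induction r using TensorProduct.induction_on with
  | zero => simp
  | tmul p q => simp [SH, HopfAlgebra.antipode_mul_antidistrib, mul_assoc]
  | add u u' ih ih' => simp only [mul_add, map_add, ih, ih', add_mul]

theorem chiInvₗ_mul_tmul (r : H ⊗[K] H) (a b : H) :
    chiInvₗ K H (r * (a ⊗ₜ b)) = SH K H a * chiInvₗ K H r * b := by
  induction r using TensorProduct.induction_on with
  | zero => simp
  | tmul p q => simp [SH, HopfAlgebra.antipode_mul_antidistrib, mul_assoc]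
  | add u u' ih ih' => simp only [add_mul, map_add, ih, ih', mul_add]

theorem chiₗ_comul (ξ : H) : chiₗ K H (ΔH K H ξ) = εH K H ξ • 1 := by
  rw [← Algebra.algebraMap_eq_smul_one]
  exact HopfAlgebra.mul_antipode_lTensor_comul_apply ξ

theorem chiInvₗ_comul (ξ : H) : chiInvₗ K H (ΔH K H ξ) = εH K H ξ • 1 := by
  rw [← Algebra.algebraMap_eq_smul_one]
  exact HopfAlgebra.mul_antipode_rTensor_comul_apply ξ

theorem chiₗ_mul_comul (r : H ⊗[K] H) (ξ : H) :
    chiₗ K H (r * ΔH K H ξ) = εH K H ξ • chiₗ K H r := by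
  induction r using TensorProduct.induction_on with
  | zero => simp
  | tmul a b => rw [chiₗ_tmul_mul, chiₗ_comul, chiₗ_tmul, mul_smul_comm, mul_one, smul_mul_assoc]
  | add u u' ih ih' => simp only [add_mul, map_add, ih, ih', smul_add]

theorem chiInvₗ_comul_mul (ξ : H) (r : H ⊗[K] H) :
    chiInvₗ K H (ΔH K H ξ * r) = εH K H ξ • chiInvₗ K H r := by
  induction r using TensorProduct.induction_on with
  | zero => simp
  | tmul a b => rw [chiInvₗ_mul_tmul, chiInvₗ_comul, chiInvₗ_tmul, mul_smul_comm, mul_one,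
      smul_mul_assoc]
  | add u u' ih ih' => simp only [mul_add, map_add, ih, ih', smul_add]

variable (K H) in
def counitLeft : H ⊗[K] H →ₗ[K] H := (TensorProduct.lid K H).toLinearMap ∘ₗ (εH K H).rTensor H
variable (K H) in
def counitRight : H ⊗[K] H →ₗ[K] H := (TensorProduct.rid K H).toLinearMap ∘ₗ (εH K H).lTensor H

@[simp] theorem counitLeft_tmul (a b : H) : counitLeft K H (a ⊗ₜ[K] b) = εH K H a • b := rfl
@[simp] theorem counitRight_tmul (a b : H) : counitRight K H (a ⊗ₜ[K] b) = εH K H b • a := rfl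

theorem counitLeft_one : counitLeft K H (1 : H ⊗[K] H) = 1 := by
  simp [Algebra.TensorProduct.one_def, εH]

theorem counitRight_one : counitRight K H (1 : H ⊗[K] H) = 1 := by
  simp [Algebra.TensorProduct.one_def, εH]

theorem counitLeft_comul (ξ : H) : counitLeft K H (ΔH K H ξ) = ξ := by
  simp [counitLeft, ΔH, εH, Coalgebra.rTensor_counit_comul]

theorem counitRight_comul (ξ : H) : counitRight K H (ΔH K H ξ) = ξ := by
  simp [counitRight, ΔH, εH, Coalgebra.lTensor_counit_comul]

variable (K H) in
def counitLeft₃ : H ⊗[K] (H ⊗[K] H) →ₐ[K] H ⊗[K] H :=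
  (Algebra.TensorProduct.lid K (H ⊗[K] H)).toAlgHom.comp
    (Algebra.TensorProduct.map (Bialgebra.counitAlgHom K H) (AlgHom.id K _))

variable (K H) in
def counitRight₃ : H ⊗[K] (H ⊗[K] H) →ₐ[K] H ⊗[K] H :=
  Algebra.TensorProduct.map (AlgHom.id K H)
    ((Algebra.TensorProduct.rid K K H).toAlgHom.comp
      (Algebra.TensorProduct.map (AlgHom.id K H) (Bialgebra.counitAlgHom K H)))

@[simp] theorem counitLeft₃_tmul (a : H) (w : H ⊗[K] H) :
    counitLeft₃ K H (a ⊗ₜ w) = εH K H a • w := rfl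

@[simp] theorem counitRight₃_tmul (a : H) (w : H ⊗[K] H) :
    counitRight₃ K H (a ⊗ₜ w) = a ⊗ₜ counitRight K H w := by
  induction w using TensorProduct.induction_on with
  | zero => simp
  | tmul b c => simp [counitRight₃, εH, TensorProduct.tmul_smul]
  | add u u' ih ih' => simp only [TensorProduct.tmul_add, map_add, ih, ih']

theorem counitLeft₃_comulLeft (x : H ⊗[K] H) : counitLeft₃ K H (comulLeft K H x) = x := by
  induction x using TensorProduct.induction_on with
  | zero => simp
  | tmul a b =>
    suffices ∀ w : H ⊗[K] H, counitLeft₃ K H (TensorProduct.assoc K H H H (w ⊗ₜ b))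
        = counitLeft K H w ⊗ₜ b by
      simpa [comulLeft, counitLeft_comul] using this (ΔH K H a)
    intro w
    induction w using TensorProduct.induction_on with
    | zero => simp
    | tmul p q => simp [TensorProduct.smul_tmul']
    | add u u' ih ih' => simp only [TensorProduct.add_tmul, map_add, ih, ih']
  | add u u' ih ih' => simp only [map_add, ih, ih']

theorem counitRight₃_comulRight (x : H ⊗[K] H) : counitRight₃ K H (comulRight K H x) = x := by
  induction x using TensorProduct.induction_on with
  | zero => simp
  | tmul a b => simp [comulRight, counitRight_comul]
  | add u u' ih ih' => simp only [map_add, ih, ih']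

theorem counitLeft₃_ins1 (x : H ⊗[K] H) : counitLeft₃ K H (ins1 K H x) = x := by
  simp [ins1, εH]

theorem counitLeft₃_ins2 (x : H ⊗[K] H) : counitLeft₃ K H (ins2 K H x) = 1 ⊗ₜ counitLeft K H x := by
  induction x using TensorProduct.induction_on with
  | zero => simp
  | tmul a b => simp [ins2, TensorProduct.tmul_smul]
  | add u u' ih ih' => simp only [map_add, ih, ih', TensorProduct.tmul_add]

theorem counitRight₃_ins3 (x : H ⊗[K] H) : counitRight₃ K H (ins3 K H x) = x := by
  induction x using TensorProduct.induction_on with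
  | zero => simp
  | tmul a b => simp [ins3, εH]
  | add u u' ih ih' => simp only [map_add, ih, ih']

theorem counitRight₃_ins2 (x : H ⊗[K] H) :
    counitRight₃ K H (ins2 K H x) = counitRight K H x ⊗ₜ 1 := by
  induction x using TensorProduct.induction_on with
  | zero => simp
  | tmul a b => simp [ins2, εH, TensorProduct.smul_tmul']
  | add u u' ih ih' => simp only [map_add, ih, ih', TensorProduct.add_tmul]

theorem ins1_apply (x : H ⊗[K] H) :
    ins1 K H x = (Algebra.TensorProduct.includeRight : H ⊗[K] H →ₐ[K] H ⊗[K] (H ⊗[K] H)) x :=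
  rfl

theorem ins3_apply (x : H ⊗[K] H) :
    ins3 K H x = Algebra.TensorProduct.map (AlgHom.id K H)
      (Algebra.TensorProduct.includeLeft : H →ₐ[K] H ⊗[K] H) x := by
  induction x using TensorProduct.induction_on with
  | zero => simp
  | tmul a b => rfl
  | add u u' ih ih' => simp only [map_add, ih, ih']

theorem leftComm_ins1 (x : H ⊗[K] H) :
    Algebra.TensorProduct.leftComm K H H H (ins1 K H x) = ins2 K H x := by
  induction x using TensorProduct.induction_on with
  | zero => simp
  | tmul a b => rfl
  | add u u' ih ih' => simp only [map_add, ih, ih']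

theorem leftComm_ins2 (x : H ⊗[K] H) :
    Algebra.TensorProduct.leftComm K H H H (ins2 K H x) = ins1 K H x := by
  induction x using TensorProduct.induction_on with
  | zero => simp
  | tmul a b => rfl
  | add u u' ih ih' => simp only [map_add, ih, ih']

theorem comulLeft_tmul (a b : H) :
    comulLeft K H (a ⊗ₜ b) = Algebra.TensorProduct.assoc K K K H H H (ΔH K H a ⊗ₜ b) := rfl

variable (K H) in
def antipodeMiddle : H ⊗[K] (H ⊗[K] H) →ₗ[K] H := muH K H ∘ₗ (chiInvₗ K H).lTensor H

@[simp] theorem antipodeMiddle_tmul (x : H) (w : H ⊗[K] H) :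
    antipodeMiddle K H (x ⊗ₜ w) = x * chiInvₗ K H w := rfl

theorem antipodeMiddle_comulRight (x : H ⊗[K] H) :
    antipodeMiddle K H (comulRight K H x) = counitRight K H x := by
  induction x using TensorProduct.induction_on with
  | zero => simp
  | tmul a b =>
    rw [show comulRight K H (a ⊗ₜ b) = a ⊗ₜ ΔH K H b from rfl, antipodeMiddle_tmul,
      chiInvₗ_comul, counitRight_tmul, mul_smul_comm, mul_one]
  | add u u' ih ih' => simp only [map_add, ih, ih']

theorem antipodeMiddle_ins1_mul_ins3_mul_comulLeft (F G x : H ⊗[K] H) :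
    antipodeMiddle K H (ins1 K H G * ins3 K H F * comulLeft K H x)
      = chi K H F * chiInv K H G * counitLeft K H x := by
  induction x using TensorProduct.induction_on with
  | zero => simp
  | tmul a b =>
    have key : ∀ w : H ⊗[K] H, antipodeMiddle K H
        (ins1 K H G * ins3 K H F * Algebra.TensorProduct.assoc K K K H H H (w ⊗ₜ b))
          = chiₗ K H (F * w) * chiInvₗ K H G * b := by
      intro w
      induction w using TensorProduct.induction_on with
      | zero => simp
      | add u u' ih ih' => simp only [mul_add, TensorProduct.add_tmul, map_add, ih, ih', add_mul]
      | tmul p q =>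
        induction F using TensorProduct.induction_on with
        | zero => simp
        | add u u' ih ih' => simp only [mul_add, add_mul, map_add, ih, ih']
        | tmul f₁ f₂ =>
          induction G using TensorProduct.induction_on with
          | zero => simp
          | add u u' ih ih' => simp only [mul_add, add_mul, map_add, ih, ih']
          | tmul g₁ g₂ =>
            simp [ins1, ins3, SH, HopfAlgebra.antipode_mul_antidistrib, mul_assoc]
    rw [comulLeft_tmul, key, chiₗ_mul_comul]
    simp [chi, chiInv, chiₗ, chiInvₗ]
  | add u u' ih ih' => simp only [map_add, mul_add, ih, ih']

theorem muH_map_twistAntipode (F G u : H ⊗[K] H) :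
    muH K H (map (twistAntipode K H F G) LinearMap.id u) = chi K H F * chiInvₗ K H (G * u) := by
  induction u using TensorProduct.induction_on with
  | zero => simp
  | tmul x y =>
    rw [chiInvₗ_mul_tmul]
    simp [muH, twistAntipode, chiInv, chiInvₗ, mul_assoc]
  | add u u' ih ih' => simp only [map_add, mul_add, ih, ih']

namespace IsQuasitriangular

variable {Rm Rinv : H ⊗[K] H}

theorem twistComul_eq (hR : IsQuasitriangular K H Rm Rinv) (ξ : H) :
    twistComul K H Rm Rinv ξ = TensorProduct.comm K H H (ΔH K H ξ) := by
  rw [hR.quasi_cocomm, mul_assoc]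
  rfl

theorem eq_one_of_mul_eq_self (hR : IsQuasitriangular K H Rm Rinv) {x : H ⊗[K] H}
    (hx : x * Rm = Rm) : x = 1 := by
  rw [← mul_one x, ← hR.mul_inv, ← mul_assoc, hx, hR.mul_inv]

theorem counitLeft_eq_one (hR : IsQuasitriangular K H Rm Rinv) : counitLeft K H Rm = 1 := by
  have h : (1 : H) ⊗ₜ[K] counitLeft K H Rm = 1 := hR.eq_one_of_mul_eq_self <| by
    conv_rhs => rw [← counitLeft₃_comulLeft Rm, hR.hexagon1]
    rw [map_mul, counitLeft₃_ins2, counitLeft₃_ins1]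
  simpa [εH, counitLeft_one] using congrArg (counitLeft K H) h

theorem counitRight_eq_one (hR : IsQuasitriangular K H Rm Rinv) : counitRight K H Rm = 1 := by
  have h : counitRight K H Rm ⊗ₜ[K] (1 : H) = 1 := hR.eq_one_of_mul_eq_self <| by
    conv_rhs => rw [← counitRight₃_comulRight Rm, hR.hexagon2]
    rw [map_mul, counitRight₃_ins3, counitRight₃_ins2]
  simpa [εH, counitRight_one] using congrArg (counitRight K H) h

theorem leftComm_comulLeft (hR : IsQuasitriangular K H Rm Rinv) (x : H ⊗[K] H) :
    Algebra.TensorProduct.leftComm K H H H (comulLeft K H x)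
      = ins3 K H Rm * comulLeft K H x * ins3 K H Rinv := by
  induction x using TensorProduct.induction_on with
  | zero => simp
  | tmul a b =>
    have hswap : ∀ w : H ⊗[K] H,
        Algebra.TensorProduct.leftComm K H H H (Algebra.TensorProduct.assoc K K K H H H (w ⊗ₜ b))
          = Algebra.TensorProduct.assoc K K K H H H (TensorProduct.comm K H H w ⊗ₜ b) := by
      intro w
      induction w using TensorProduct.induction_on with
      | zero => simp
      | tmul p q => rfl
      | add u u' ih ih' => simp only [TensorProduct.add_tmul, map_add, ih, ih']
    have hins3 : ∀ w : H ⊗[K] H, Algebra.TensorProduct.assoc K K K H H H (w ⊗ₜ 1) = ins3 K H w := by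
      intro w
      induction w using TensorProduct.induction_on with
      | zero => simp
      | tmul p q => rfl
      | add u u' ih ih' => simp only [TensorProduct.add_tmul, map_add, ih, ih']
    rw [comulLeft_tmul, hswap, hR.quasi_cocomm, ← hins3, ← hins3, ← map_mul, ← map_mul,
      Algebra.TensorProduct.tmul_mul_tmul, Algebra.TensorProduct.tmul_mul_tmul, one_mul, mul_one]
  | add u u' ih ih' => simp only [map_add, ih, ih', mul_add, add_mul]

theorem yangBaxter (hR : IsQuasitriangular K H Rm Rinv) :
    ins3 K H Rm * ins2 K H Rm * ins1 K H Rm = ins1 K H Rm * ins2 K H Rm * ins3 K H Rm := by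
  have h := hR.leftComm_comulLeft Rm
  rw [hR.hexagon1, map_mul, leftComm_ins1, leftComm_ins2] at h
  rw [h, mul_assoc _ (ins3 K H Rinv), ins3_apply Rinv, ins3_apply Rm, ← map_mul, hR.inv_mul,
    map_one, mul_one, mul_assoc]

theorem chi_mul_chiInv (hR : IsQuasitriangular K H Rm Rinv) : chi K H Rm * chiInv K H Rinv = 1 := by
  have hyb := hR.yangBaxter
  simp only [mul_assoc] at hyb
  calc chi K H Rm * chiInv K H Rinv
      = antipodeMiddle K H (ins1 K H Rinv * ins3 K H Rm * comulLeft K H Rm) := by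
        rw [antipodeMiddle_ins1_mul_ins3_mul_comulLeft, hR.counitLeft_eq_one, mul_one]
    _ = antipodeMiddle K H (ins1 K H (Rinv * Rm) * (ins2 K H Rm * ins3 K H Rm)) := by
        rw [hR.hexagon1, mul_assoc, hyb, ← mul_assoc, ins1_apply, ins1_apply,
          ins1_apply, ← map_mul]
    _ = 1 := by
        rw [hR.inv_mul, ← hR.hexagon2, ins1_apply, map_one, one_mul, antipodeMiddle_comulRight,
          hR.counitRight_eq_one]

theorem muH_map_twistAntipode_comm_comul (hR : IsQuasitriangular K H Rm Rinv) (ξ : H) :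
    muH K H (map (twistAntipode K H Rm Rinv) LinearMap.id
      (TensorProduct.comm K H H (ΔH K H ξ))) = εH K H ξ • 1 := by
  rw [muH_map_twistAntipode, hR.quasi_cocomm, ← mul_assoc, ← mul_assoc, hR.inv_mul, one_mul,
    chiInvₗ_comul_mul, mul_smul_comm]
  exact congrArg _ hR.chi_mul_chiInv

theorem twistAntipode_eq (hR : IsQuasitriangular K H Rm Rinv) {Sinv : H →ₗ[K] H}
    (hS : ∀ ξ : H, Sinv (SH K H ξ) = ξ) (ξ : H) : twistAntipode K H Rm Rinv ξ = Sinv ξ := by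
  have h := LinearMap.congr_fun
    (antipode_comp_eq_id_of_cop_left_inv _ hR.muH_map_twistAntipode_comm_comul) ξ
  rw [LinearMap.comp_apply, LinearMap.id_apply] at h
  rw [← hS (twistAntipode K H Rm Rinv ξ), h]

theorem sw_comm_inv_sw_comm (hR : IsQuasitriangular K H Rm Rinv) {V W Z : Type*}
    [AddCommGroup V] [Module K V] [AddCommGroup W] [Module K W] [AddCommGroup Z] [Module K Z]
    {f : H →ₗ[K] V →ₗ[K] V} {g : H →ₗ[K] W →ₗ[K] W} (hf : IsHAction K H f)
    (hg : IsHAction K H g) (c : V →ₗ[K] W →ₗ[K] Z) (v : V) (w : W) :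
    sw K H (TensorProduct.comm K H H Rinv) f g (sw K H (TensorProduct.comm K H H Rm) f g c) v w
      = c v w := by
  have hcomm : TensorProduct.comm K H H Rm * TensorProduct.comm K H H Rinv = 1 := by
    have h := map_mul (Algebra.TensorProduct.comm K H H) Rm Rinv
    rw [hR.mul_inv, map_one] at h
    exact h.symm
  rw [sw_sw_eq_sw_mul _ _ hf.1 hg.1, hcomm, sw_one hf.2 hg.2]

end IsQuasitriangular

end

theorem R_twist_is_opposite (Rm Rinv : H ⊗[K] H)
    (hR : IsQuasitriangular K H Rm Rinv)
    -- the antipode is invertible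
    (Sinv : H →ₗ[K] H)
    (hS2 : ∀ ξ : H, Sinv (SH K H ξ) = ξ)
    -- the quasi-commutative H-module algebra A
    (mA : A →ₗ[K] A →ₗ[K] A) (ρA : H →ₗ[K] A →ₗ[K] A)
    (hAma : IsModuleAlgebra K H mA ρA)
    (hqcA : ∀ a b : A, mA a b = sw K H Rinv ρA ρA mA b a)
    -- the strong quasi-commutative left H-module A-bimodule V
    (ρV : H →ₗ[K] V →ₗ[K] V) (hV : IsHAction K H ρV)
    (lV rV : A →ₗ[K] V →ₗ[K] V)
    (hqcV : ∀ (a : A) (v : V), rV a v = sw K H Rinv ρA ρV lV a v)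
    (hsqcV : ∀ (a : A) (v : V),
      rV a v = sw K H (TensorProduct.comm K H H Rm) ρA ρV lV a v) :
    -- `H^R = H^cop`: the `R`-twisted coproduct is the coopposite coproduct ...
    (∀ ξ : H, twistComul K H Rm Rinv ξ = TensorProduct.comm K H H (ΔH K H ξ))
    -- ... and the `R`-twisted antipode is `S⁻¹`
    ∧ (∀ ξ : H, twistAntipode K H Rm Rinv ξ = Sinv ξ)
    -- `A_{⋆_R} = A^op`: `a ⋆_R b = (R̄^α ▷ a)(R̄_α ▷ b) = b a`
    ∧ (∀ a b : A, sw K H Rinv ρA ρA mA a b = mA b a)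
    -- `V_{⋆_R} = V^op`: `a ⋆_R v = v·a` and `v ⋆_R a = a·v`
    ∧ (∀ (a : A) (v : V), sw K H Rinv ρA ρV lV a v = rV a v)
    ∧ (∀ (a : A) (v : V), sw K H Rinv ρV ρA rV.flip v a = lV a v) := by
  refine ⟨hR.twistComul_eq, hR.twistAntipode_eq hS2, fun a b => (hqcA b a).symm,
    fun a v => (hqcV a v).symm, fun a v => ?_⟩
  have hrV : rV.flip = (sw K H (TensorProduct.comm K H H Rm) ρA ρV lV).flip := by
    ext w b
    exact hsqcV b w
  rw [hrV, sw_flip, hR.sw_comm_inv_sw_comm hAma.1 hV]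

end TwistPaper
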